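/- arXiv:2307.02941 — 3 statements merged into one kernel-verified Lean document; each statement's English description precedes it below -/
import Mathlib

section
/- Suppose G is connected and p ≥ r + 2, and the measurements are noiseless (Δ = 0, so L̂ = L_Z). Then every second-order critical point Y of the rank-p problem min{⟨L̂, Y Yᵀ⟩ : Y feasible} satisfies Y Yᵀ = Z Zᵀ. -/
open Matrix MeasureTheory ProbabilityTheory
open scoped Kronecker BigOperators

namespace SyncPaper

variable {α : Type*}

/-- The `i`-th `r × p` row-block of a block matrix `Y ∈ α^{rn × p}`. -/
def blk {n r p : ℕ} (Y : Matrix (Fin n × Fin r) (Fin p) α) (i : Fin n) :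
    Matrix (Fin r) (Fin p) α :=
  Matrix.of fun a b => Y (i, a) b

/-- `Y` is feasible: every `r × p` row-block has orthonormal rows. -/
def Feasible {n r p : ℕ} (Y : Matrix (Fin n × Fin r) (Fin p) ℝ) : Prop :=
  ∀ i, blk Y i * (blk Y i)ᵀ = 1

/-- Symmetric block-diagonal projection: keeps the symmetric part of each `r × r`
diagonal block and zeroes out all off-diagonal blocks. -/
noncomputable def SBD {n r : ℕ} (M : Matrix (Fin n × Fin r) (Fin n × Fin r) ℝ) :
    Matrix (Fin n × Fin r) (Fin n × Fin r) ℝ :=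
  Matrix.of fun q q' => if q.1 = q'.1 then (M q q' + M q' q) / 2 else 0

/-- The matrix `S(Y) = L̂ − SBD(L̂ Y Yᵀ)`. -/
noncomputable def Smat {n r p : ℕ} (Lhat : Matrix (Fin n × Fin r) (Fin n × Fin r) ℝ)
    (Y : Matrix (Fin n × Fin r) (Fin p) ℝ) :
    Matrix (Fin n × Fin r) (Fin n × Fin r) ℝ :=
  Lhat - SBD (Lhat * Y * Yᵀ)

/-- Second-order critical point of the rank-`p` problem `min ⟨L̂, Y Yᵀ⟩` over feasible `Y`. -/
def IsSecondOrderCritical {n r p : ℕ} (Lhat : Matrix (Fin n × Fin r) (Fin n × Fin r) ℝ)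
    (Y : Matrix (Fin n × Fin r) (Fin p) ℝ) : Prop :=
  Feasible Y ∧ Smat Lhat Y * Y = 0 ∧
    ∀ Ydot : Matrix (Fin n × Fin r) (Fin p) ℝ,
      (∀ i, blk Ydot i * (blk Y i)ᵀ + blk Y i * (blk Ydot i)ᵀ = 0) →
      0 ≤ (Smat Lhat Y * Ydot * Ydotᵀ).trace

/-- The stacked ground truth `Z ∈ ℝ^{rn × r}`. -/
def Zstack {n r : ℕ} (Zb : Fin n → Matrix (Fin r) (Fin r) ℝ) :
    Matrix (Fin n × Fin r) (Fin r) ℝ :=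
  Matrix.of fun q b => Zb q.1 q.2 b

/-- The block-diagonal matrix `D` with diagonal blocks `Z_1, …, Z_n`. -/
def Dmat {n r : ℕ} (Zb : Fin n → Matrix (Fin r) (Fin r) ℝ) :
    Matrix (Fin n × Fin r) (Fin n × Fin r) ℝ :=
  Matrix.of fun q q' => if q.1 = q'.1 then Zb q.1 q.2 q'.2 else 0

/-- `L_Z = D (L ⊗ I_r) Dᵀ`. -/
def LZmat {n r : ℕ} (L : Matrix (Fin n) (Fin n) ℝ) (Zb : Fin n → Matrix (Fin r) (Fin r) ℝ) :
    Matrix (Fin n × Fin r) (Fin n × Fin r) ℝ :=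
  Dmat Zb * (L ⊗ₖ (1 : Matrix (Fin r) (Fin r) ℝ)) * (Dmat Zb)ᵀ

/-- The ℓ₂→ℓ₂ operator norm of a matrix. -/
noncomputable def opNorm {m m' : Type*} [Fintype m] [Fintype m'] [DecidableEq m']
    (M : Matrix m m' ℝ) : ℝ :=
  ‖(Matrix.toEuclideanLin (𝕜 := ℝ) (m := m) (n := m')).trans
      LinearMap.toContinuousLinearMap M‖

/-- The second-smallest eigenvalue of a connected graph Laplacian, via the variational
(Courant–Fischer) characterization: the minimum of the quadratic form over unit vectors
orthogonal to the all-ones vector. -/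
noncomputable def lam2 {n : ℕ} (L : Matrix (Fin n) (Fin n) ℝ) : ℝ :=
  sInf {t : ℝ | ∃ x : Fin n → ℝ, (∑ i, x i = 0) ∧ (∑ i, (x i) ^ 2 = 1) ∧ t = x ⬝ᵥ (L *ᵥ x)}

/-- Squared Frobenius norm of a real matrix. -/
def frobSq {m m' : Type*} [Fintype m] [Fintype m'] (M : Matrix m m' ℝ) : ℝ :=
  ∑ i, ∑ j, (M i j) ^ 2

/-- The inner product `⟨A, B⟩ = tr(A Bᵀ)`. -/
def ip {m : Type*} [Fintype m] (A B : Matrix m m ℝ) : ℝ := (A * Bᵀ).trace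

/-- Feasibility for the SDP relaxation. -/
def SDPFeasible {n r : ℕ} (X : Matrix (Fin n × Fin r) (Fin n × Fin r) ℝ) : Prop :=
  X.PosSemidef ∧ SBD X = 1

end SyncPaper

/-!
Write `Yᵢ = Zᵢ Xᵢ`, so that each `Xᵢ` has orthonormal rows. Test the second-order condition
along `Ẏᵢ = Zᵢ (E - Xᵢ Eᵀ Xᵢ)` (tangent because `(E - X Eᵀ X) Xᵀ = E Xᵀ - X Eᵀ` is skew) for every
matrix unit `E = E_{ak}` and sum: the gauge `Z` drops out, and with `tᵢⱼ = tr (Xⱼ Xᵢᵀ) ≤ r` one gets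
`0 ≤ ∑ᵢⱼ Lᵢⱼ f(tᵢⱼ)` for `f(s) = (s - r)(s - (p - 2))`. As `f(r) = 0` this is `-∑_{i ∼ j} f(tᵢⱼ)`,
while `f(s) > 0` for `s < r ≤ p - 2`; hence `tᵢⱼ = r`, i.e. `Xᵢ = Xⱼ`, across every edge. By
connectivity all `Xᵢ` equal one `X` with `X Xᵀ = 1`, and `Yᵢ Yⱼᵀ = Zᵢ X Xᵀ Zⱼᵀ = Zᵢ Zⱼᵀ`.
-/

namespace Matrix

section OrthonormalRows

variable {m n : Type*} [Fintype m] [Fintype n] [DecidableEq m]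

theorem trace_sub_mul_transpose_sub {A B : Matrix m n ℝ} (hA : A * Aᵀ = 1) (hB : B * Bᵀ = 1) :
    ((A - B) * (A - B)ᵀ).trace = 2 * Fintype.card m - 2 * (A * Bᵀ).trace := by
  have hBA : (B * Aᵀ).trace = (A * Bᵀ).trace := by
    rw [← trace_transpose, transpose_mul, transpose_transpose]
  simp only [transpose_sub, Matrix.sub_mul, Matrix.mul_sub, trace_sub, hA, hB, hBA, trace_one]
  ring

theorem trace_mul_transpose_le {A B : Matrix m n ℝ} (hA : A * Aᵀ = 1) (hB : B * Bᵀ = 1) :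
    (A * Bᵀ).trace ≤ Fintype.card m := by
  have h := (posSemidef_self_mul_conjTranspose (A - B)).trace_nonneg
  rw [conjTranspose_eq_transpose_of_trivial, trace_sub_mul_transpose_sub hA hB] at h
  linarith

theorem eq_of_trace_mul_transpose_eq {A B : Matrix m n ℝ} (hA : A * Aᵀ = 1) (hB : B * Bᵀ = 1)
    (h : (A * Bᵀ).trace = Fintype.card m) : A = B := by
  have h0 : ((A - B) * (A - B)ᴴ).trace = 0 := by
    rw [conjTranspose_eq_transpose_of_trivial, trace_sub_mul_transpose_sub hA hB, h]
    ring
  exact sub_eq_zero.mp (trace_mul_conjTranspose_self_eq_zero_iff.mp h0)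

end OrthonormalRows

section MatrixUnits

variable {m n R : Type*} [Fintype m] [Fintype n] [DecidableEq m] [DecidableEq n] [CommRing R]

theorem sum_single_mul_mul_single (B : Matrix n m R) :
    ∑ a : m, ∑ k : n, single a k (1 : R) * B * single a k (1 : R) = Bᵀ := by
  simp only [single_mul_mul_single, one_mul, mul_one]
  conv_rhs => rw [matrix_eq_sum_single Bᵀ]
  rfl

theorem sum_transpose_single_mul_mul_transpose_single (D : Matrix m n R) :
    ∑ a : m, ∑ k : n, (single a k (1 : R))ᵀ * D * (single a k (1 : R))ᵀ = Dᵀ := by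
  simp only [transpose_single, single_mul_mul_single, one_mul, mul_one]
  conv_rhs => rw [matrix_eq_sum_single Dᵀ]
  exact Finset.sum_comm

theorem sum_single_mul_transpose_single :
    ∑ a : m, ∑ k : n, single a k (1 : R) * (single a k (1 : R))ᵀ = (Fintype.card n : R) • 1 := by
  simp [transpose_single, ← sum_single_one, Finset.smul_sum]

theorem sum_transpose_single_mul_mul_single (C : Matrix m m R) :
    ∑ a : m, ∑ k : n, (single a k (1 : R))ᵀ * C * single a k (1 : R) = C.trace • 1 := by
  simp only [transpose_single, single_mul_mul_single, one_mul, mul_one]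
  rw [Finset.sum_comm, ← sum_single_one, Finset.smul_sum]
  refine Finset.sum_congr rfl fun k _ => ?_
  rw [smul_single, smul_eq_mul, mul_one, trace]
  exact (map_sum (singleAddMonoidHom (α := R) k k) _ _).symm

end MatrixUnits

end Matrix

namespace SimpleGraph

theorem Reachable.apply_eq_of_forall_adj {V β : Type*} {G : SimpleGraph V} {f : V → β}
    (hf : ∀ i j, G.Adj i j → f i = f j) {u v : V} (h : G.Reachable u v) : f u = f v := by
  obtain ⟨w⟩ := h
  induction w with
  | nil => rfl
  | cons hadj _ ih => exact (hf _ _ hadj).trans ih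

variable {V : Type*} [Fintype V] [DecidableEq V] (G : SimpleGraph V) [DecidableRel G.Adj]

theorem sum_lapMatrix_mul {R : Type*} [CommRing R] (g : V → V → R) :
    ∑ i, ∑ j, G.lapMatrix R i j * g i j = ∑ i, ∑ j, if G.Adj i j then g i i - g i j else 0 := by
  refine Finset.sum_congr rfl fun i _ => ?_
  simp only [lapMatrix, degMatrix, Matrix.sub_apply, diagonal_apply, adjMatrix_apply, sub_mul,
    ite_mul, one_mul, zero_mul, Finset.sum_sub_distrib, Finset.sum_ite_eq, Finset.mem_univ, if_true]
  rw [G.degree_eq_sum_if_adj, Finset.sum_mul, ← Finset.sum_sub_distrib]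
  exact Finset.sum_congr rfl fun j _ => by split_ifs <;> ring

theorem eq_of_adj_of_sum_lapMatrix_nonneg {f : ℝ → ℝ} {c : ℝ} (hfc : f c = 0)
    (hf : ∀ s < c, 0 < f s) {t : V → V → ℝ} (ht : ∀ i j, t i j ≤ c) (hdiag : ∀ i, t i i = c)
    (h : 0 ≤ ∑ i, ∑ j, G.lapMatrix ℝ i j * f (t i j)) {i j : V} (hij : G.Adj i j) :
    t i j = c := by
  have hT : ∀ i j, 0 ≤ if G.Adj i j then f (t i j) else 0 := fun i j => by
    split_ifs
    · exact (ht i j).lt_or_eq.elim (fun hlt => (hf _ hlt).le) fun heq => by rw [heq, hfc]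
    · rfl
  have hsum : ∑ i, ∑ j, (if G.Adj i j then f (t i j) else 0) ≤ 0 := by
    rw [sum_lapMatrix_mul] at h
    rw [← neg_nonneg, ← Finset.sum_neg_distrib]
    refine h.trans_eq (Finset.sum_congr rfl fun i _ => ?_)
    rw [← Finset.sum_neg_distrib]
    exact Finset.sum_congr rfl fun j _ => by split_ifs <;> simp [hdiag, hfc]
  have hle : f (t i j) ≤ 0 :=
    calc f (t i j) = if G.Adj i j then f (t i j) else 0 := (if_pos hij).symm
      _ ≤ ∑ j, if G.Adj i j then f (t i j) else 0 :=
        Finset.single_le_sum (fun j _ => hT i j) (Finset.mem_univ j)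
      _ ≤ ∑ i, ∑ j, if G.Adj i j then f (t i j) else 0 :=
        Finset.single_le_sum (fun i _ => Finset.sum_nonneg fun j _ => hT i j) (Finset.mem_univ i)
      _ ≤ 0 := hsum
  exact (ht i j).eq_of_not_lt fun hlt => (hf _ hlt).not_ge hle

end SimpleGraph

namespace SyncPaper

section Blocks

variable {n r p : ℕ} {α R : Type*} [CommRing R]

def sqBlk (M : Matrix (Fin n × Fin r) (Fin n × Fin r) α) (i j : Fin n) :
    Matrix (Fin r) (Fin r) α :=
  of fun a b => M (i, a) (j, b)

def ofBlk (B : Fin n → Matrix (Fin r) (Fin p) α) : Matrix (Fin n × Fin r) (Fin p) α :=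
  of fun q b => B q.1 q.2 b

@[simp]
theorem blk_ofBlk (B : Fin n → Matrix (Fin r) (Fin p) α) (i : Fin n) : blk (ofBlk B) i = B i :=
  rfl

theorem blk_Zstack (Zb : Fin n → Matrix (Fin r) (Fin r) ℝ) (i : Fin n) : blk (Zstack Zb) i = Zb i :=
  rfl

theorem ext_sqBlk {M N : Matrix (Fin n × Fin r) (Fin n × Fin r) α}
    (h : ∀ i j, sqBlk M i j = sqBlk N i j) : M = N := by
  ext ⟨i, a⟩ ⟨j, b⟩
  exact congrFun₂ (h i j) a b

theorem trace_eq_sum_sqBlk (M : Matrix (Fin n × Fin r) (Fin n × Fin r) R) :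
    M.trace = ∑ i, (sqBlk M i i).trace := by
  simp [trace, sqBlk, Fintype.sum_prod_type]

theorem sqBlk_mul_transpose (U V : Matrix (Fin n × Fin r) (Fin p) R) (i j : Fin n) :
    sqBlk (U * Vᵀ) i j = blk U i * (blk V j)ᵀ := by
  ext a b
  simp [sqBlk, blk, mul_apply]

theorem sqBlk_mul (M N : Matrix (Fin n × Fin r) (Fin n × Fin r) R) (i j : Fin n) :
    sqBlk (M * N) i j = ∑ k, sqBlk M i k * sqBlk N k j := by
  ext a b
  simp [sqBlk, mul_apply, Fintype.sum_prod_type, Matrix.sum_apply]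

theorem sqBlk_mul_mul_transpose (M : Matrix (Fin n × Fin r) (Fin n × Fin r) R)
    (U V : Matrix (Fin n × Fin r) (Fin p) R) (i j : Fin n) :
    sqBlk (M * U * Vᵀ) i j = ∑ k, sqBlk M i k * (blk U k * (blk V j)ᵀ) := by
  rw [Matrix.mul_assoc, sqBlk_mul]
  simp only [sqBlk_mul_transpose]

theorem trace_mul_mul_transpose (M : Matrix (Fin n × Fin r) (Fin n × Fin r) R)
    (U : Matrix (Fin n × Fin r) (Fin p) R) :
    (M * U * Uᵀ).trace = ∑ i, ∑ j, (sqBlk M i j * (blk U j * (blk U i)ᵀ)).trace := by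
  simp only [trace_eq_sum_sqBlk (M * U * Uᵀ), sqBlk_mul_mul_transpose, trace_sum]

theorem sqBlk_SBD (M : Matrix (Fin n × Fin r) (Fin n × Fin r) ℝ) (i j : Fin n) :
    sqBlk (SBD M) i j = if i = j then (2⁻¹ : ℝ) • (sqBlk M i i + (sqBlk M i i)ᵀ) else 0 := by
  ext a b
  split_ifs with h
  · subst h
    simp [sqBlk, SBD, div_eq_inv_mul]
  · simp [sqBlk, SBD, h]

theorem trace_SBD_mul_mul_transpose (M : Matrix (Fin n × Fin r) (Fin n × Fin r) ℝ)
    (U : Matrix (Fin n × Fin r) (Fin p) ℝ) :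
    (SBD M * U * Uᵀ).trace = ∑ i, (sqBlk M i i * (blk U i * (blk U i)ᵀ)).trace := by
  rw [trace_mul_mul_transpose]
  refine Finset.sum_congr rfl fun i _ => ?_
  rw [Finset.sum_eq_single i (fun j _ hji => by simp [sqBlk_SBD, Ne.symm hji]) (by simp),
    sqBlk_SBD, if_pos rfl, smul_mul, trace_smul, add_mul, trace_add]
  -- `Uᵢ Uᵢᵀ` is symmetric, so it pairs with `Mᵢᵢᵀ` as with `Mᵢᵢ`
  rw [← trace_transpose ((sqBlk M i i)ᵀ * _), transpose_mul, transpose_transpose, transpose_mul,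
    transpose_transpose, trace_mul_comm (blk U i * (blk U i)ᵀ), smul_eq_mul]
  ring

theorem sqBlk_LZmat (L : Matrix (Fin n) (Fin n) ℝ) (Zb : Fin n → Matrix (Fin r) (Fin r) ℝ)
    (i j : Fin n) : sqBlk (LZmat L Zb) i j = L i j • (Zb i * (Zb j)ᵀ) := by
  ext a b
  simp only [sqBlk, LZmat, Dmat, mul_apply, of_apply, kroneckerMap_apply, one_apply, mul_ite,
    mul_one, mul_zero, ite_mul, zero_mul, Fintype.sum_prod_type, Finset.sum_ite_eq',
    Finset.mem_univ, ↓reduceIte, Finset.sum_ite_eq, transpose_apply, Finset.sum_ite_irrel,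
    Finset.sum_const_zero, Matrix.smul_apply, smul_eq_mul, Finset.mul_sum]
  exact Finset.sum_congr rfl fun _ _ => by ring

end Blocks

section TestDirections

variable {m n R : Type*} [Fintype m] [Fintype n] [DecidableEq m] [DecidableEq n] [CommRing R]

def testDir (X : Matrix m n R) (a : m) (k : n) : Matrix m n R :=
  single a k 1 - X * (single a k (1 : R))ᵀ * X

theorem testDir_mul_transpose_add (X : Matrix m n R) (hX : X * Xᵀ = 1) (a : m) (k : n) :
    testDir X a k * Xᵀ + X * (testDir X a k)ᵀ = 0 := by
  simp only [testDir, Matrix.sub_mul, Matrix.mul_sub, transpose_sub, transpose_mul,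
    transpose_transpose, Matrix.mul_assoc, hX, Matrix.mul_one]
  simp only [← Matrix.mul_assoc, hX, Matrix.one_mul]
  abel

theorem sum_testDir_mul_transpose (A B : Matrix m n R) (hA : A * Aᵀ = 1) (hB : B * Bᵀ = 1) :
    ∑ a : m, ∑ k : n, testDir B a k * (testDir A a k)ᵀ
      = ((Fintype.card n : R) - 2) • 1 + (B * Aᵀ).trace • (B * Aᵀ) := by
  have expand : ∀ a k, testDir B a k * (testDir A a k)ᵀ
      = single a k (1 : R) * (single a k (1 : R))ᵀ
        - single a k (1 : R) * Aᵀ * single a k (1 : R) * Aᵀ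
        - B * ((single a k (1 : R))ᵀ * B * (single a k (1 : R))ᵀ)
        + B * ((single a k (1 : R))ᵀ * (B * Aᵀ) * single a k (1 : R)) * Aᵀ := by
    intro a k
    simp only [testDir, Matrix.sub_mul, Matrix.mul_sub, transpose_sub, transpose_mul,
      transpose_transpose, Matrix.mul_assoc]
    abel
  simp only [expand, Finset.sum_add_distrib, Finset.sum_sub_distrib, ← Matrix.sum_mul,
    ← Matrix.mul_sum, sum_single_mul_transpose_single, sum_single_mul_mul_single,
    sum_transpose_single_mul_mul_transpose_single, sum_transpose_single_mul_mul_single,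
    transpose_transpose, hA, hB, Matrix.mul_smul, Matrix.smul_mul, Matrix.mul_one]
  module

theorem sum_trace_testDir (A B : Matrix m n R) (hA : A * Aᵀ = 1) (hB : B * Bᵀ = 1) :
    ∑ a : m, ∑ k : n, ((testDir B a k * (testDir A a k)ᵀ).trace
        - (B * Aᵀ * (testDir A a k * (testDir A a k)ᵀ)).trace)
      = ((B * Aᵀ).trace - Fintype.card m) * ((B * Aᵀ).trace - (Fintype.card n - 2)) := by
  simp only [Finset.sum_sub_distrib, ← trace_sum, ← Matrix.mul_sum,
    sum_testDir_mul_transpose A B hA hB, sum_testDir_mul_transpose A A hA hA, hA]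
  simp only [trace_add, trace_smul, trace_one, Matrix.mul_add,
    Matrix.mul_smul, Matrix.mul_one, smul_eq_mul]
  ring

end TestDirections

theorem trace_Smat_LZmat_mul_mul_transpose {n r p : ℕ} (L : Matrix (Fin n) (Fin n) ℝ)
    {Zb : Fin n → Matrix (Fin r) (Fin r) ℝ} (hZ : ∀ i, (Zb i)ᵀ * Zb i = 1)
    {Y Ydot : Matrix (Fin n × Fin r) (Fin p) ℝ} {X W : Fin n → Matrix (Fin r) (Fin p) ℝ}
    (hY : ∀ i, blk Y i = Zb i * X i) (hYdot : ∀ i, blk Ydot i = Zb i * W i) :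
    (Smat (LZmat L Zb) Y * Ydot * Ydotᵀ).trace
      = ∑ i, ∑ j, L i j * ((W j * (W i)ᵀ).trace - (X j * (X i)ᵀ * (W i * (W i)ᵀ)).trace) := by
  have hconj : ∀ i j (A B : Matrix (Fin r) (Fin p) ℝ),
      Zb i * (Zb j)ᵀ * (Zb j * B * (Zb i * A)ᵀ) = Zb i * (B * Aᵀ) * (Zb i)ᵀ := by
    intro i j A B
    simp only [transpose_mul, Matrix.mul_assoc]
    rw [← Matrix.mul_assoc (Zb j)ᵀ, hZ j, Matrix.one_mul]
  have hconj_mul : ∀ i (C S : Matrix (Fin r) (Fin r) ℝ),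
      Zb i * C * (Zb i)ᵀ * (Zb i * S * (Zb i)ᵀ) = Zb i * (C * S) * (Zb i)ᵀ := by
    intro i C S
    simp only [Matrix.mul_assoc]
    rw [← Matrix.mul_assoc (Zb i)ᵀ, hZ i, Matrix.one_mul]
  have htrace : ∀ i (C : Matrix (Fin r) (Fin r) ℝ), (Zb i * C * (Zb i)ᵀ).trace = C.trace := by
    intro i C
    rw [trace_mul_comm, ← Matrix.mul_assoc, hZ i, Matrix.one_mul]
  have hΛ : ∀ i, sqBlk (LZmat L Zb * Y * Yᵀ) i i
      = ∑ j, L i j • (Zb i * (X j * (X i)ᵀ) * (Zb i)ᵀ) := by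
    intro i
    simp only [sqBlk_mul_mul_transpose, sqBlk_LZmat, hY, smul_mul, hconj]
  have hYdotYdot : ∀ i, blk Ydot i * (blk Ydot i)ᵀ = Zb i * (W i * (W i)ᵀ) * (Zb i)ᵀ := by
    intro i
    simp only [hYdot, transpose_mul, Matrix.mul_assoc]
  rw [Smat, Matrix.sub_mul, Matrix.sub_mul, trace_sub, trace_mul_mul_transpose,
    trace_SBD_mul_mul_transpose, ← Finset.sum_sub_distrib]
  refine Finset.sum_congr rfl fun i _ => ?_
  simp only [hΛ, hYdotYdot, Finset.sum_mul, smul_mul, hconj_mul, trace_sum, trace_smul, htrace]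
  simp only [sqBlk_LZmat, hYdot, smul_mul, trace_smul, hconj, htrace, ← Finset.sum_sub_distrib,
    mul_sub, smul_eq_mul]

theorem IsSecondOrderCritical.sum_mul_nonneg {n r p : ℕ} (L : Matrix (Fin n) (Fin n) ℝ)
    {Zb : Fin n → Matrix (Fin r) (Fin r) ℝ} (hZ : ∀ i, (Zb i)ᵀ * Zb i = 1)
    {Y : Matrix (Fin n × Fin r) (Fin p) ℝ} (hY : IsSecondOrderCritical (LZmat L Zb) Y)
    {X : Fin n → Matrix (Fin r) (Fin p) ℝ} (hYX : ∀ i, blk Y i = Zb i * X i)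
    (hX : ∀ i, X i * (X i)ᵀ = 1) :
    0 ≤ ∑ i, ∑ j, L i j *
      (((X j * (X i)ᵀ).trace - r) * ((X j * (X i)ᵀ).trace - ((p : ℝ) - 2))) := by
  have htangent : ∀ a k i, blk (ofBlk fun i => Zb i * testDir (X i) a k) i * (blk Y i)ᵀ
      + blk Y i * (blk (ofBlk fun i => Zb i * testDir (X i) a k) i)ᵀ = 0 := by
    intro a k i
    have h := congrArg (fun M => Zb i * M * (Zb i)ᵀ) (testDir_mul_transpose_add (X i) (hX i) a k)
    simpa only [Matrix.mul_add, Matrix.add_mul, transpose_mul, Matrix.mul_assoc, Matrix.mul_zero,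
      Matrix.zero_mul, hYX, blk_ofBlk] using h
  calc (0 : ℝ) ≤ ∑ a, ∑ k, (Smat (LZmat L Zb) Y * (ofBlk fun i => Zb i * testDir (X i) a k)
        * (ofBlk fun i => Zb i * testDir (X i) a k)ᵀ).trace :=
        Finset.sum_nonneg fun a _ => Finset.sum_nonneg fun k _ => hY.2.2 _ (htangent a k)
    _ = ∑ a, ∑ k, ∑ i, ∑ j, L i j * ((testDir (X j) a k * (testDir (X i) a k)ᵀ).trace
          - (X j * (X i)ᵀ * (testDir (X i) a k * (testDir (X i) a k)ᵀ)).trace) :=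
        Finset.sum_congr rfl fun a _ => Finset.sum_congr rfl fun k _ =>
          trace_Smat_LZmat_mul_mul_transpose L hZ hYX fun i => rfl
    _ = _ := by
        rw [← Fintype.sum_prod_type', Finset.sum_comm]
        refine Finset.sum_congr rfl fun i _ => ?_
        rw [Finset.sum_comm]
        refine Finset.sum_congr rfl fun j _ => ?_
        rw [← Finset.mul_sum]
        simp only [Fintype.sum_prod_type, sum_trace_testDir _ _ (hX i) (hX j), Fintype.card_fin]

theorem IsSecondOrderCritical.eq_of_adj {n r p : ℕ} (hp : r + 2 ≤ p) (G : SimpleGraph (Fin n))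
    [DecidableRel G.Adj] {Zb : Fin n → Matrix (Fin r) (Fin r) ℝ} (hZ : ∀ i, (Zb i)ᵀ * Zb i = 1)
    {Y : Matrix (Fin n × Fin r) (Fin p) ℝ} (hY : IsSecondOrderCritical (LZmat (G.lapMatrix ℝ) Zb) Y)
    {X : Fin n → Matrix (Fin r) (Fin p) ℝ} (hYX : ∀ i, blk Y i = Zb i * X i)
    (hX : ∀ i, X i * (X i)ᵀ = 1) {i j : Fin n} (hij : G.Adj i j) : X i = X j := by
  have hrp : (r : ℝ) ≤ p - 2 := by
    rw [le_sub_iff_add_le]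
    exact_mod_cast hp
  refine (eq_of_trace_mul_transpose_eq (hX j) (hX i) ?_).symm
  rw [Fintype.card_fin]
  refine G.eq_of_adj_of_sum_lapMatrix_nonneg (f := fun s => (s - r) * (s - (p - 2)))
    (t := fun i j => (X j * (X i)ᵀ).trace) (by simp)
    (fun s hs => mul_pos_of_neg_of_neg (by linarith) (by linarith)) (fun i j => ?_) (fun i => ?_)
    (hY.sum_mul_nonneg _ hZ hYX hX) hij
  · simpa only [Fintype.card_fin] using trace_mul_transpose_le (hX j) (hX i)
  · simp only [hX, trace_one, Fintype.card_fin]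

theorem noiseless_landscape_general
    (n r p : ℕ) (hp : r + 2 ≤ p)
    (G : SimpleGraph (Fin n)) [DecidableRel G.Adj] (hG : G.Connected)
    (Zb : Fin n → Matrix (Fin r) (Fin r) ℝ) (hZb : ∀ i, Zb i * (Zb i)ᵀ = 1)
    (Lhat : Matrix (Fin n × Fin r) (Fin n × Fin r) ℝ)
    (hLhat : Lhat = LZmat (G.lapMatrix ℝ) Zb)
    (Y : Matrix (Fin n × Fin r) (Fin p) ℝ)
    (hY : IsSecondOrderCritical Lhat Y) :
    Y * Yᵀ = Zstack Zb * (Zstack Zb)ᵀ := by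
  subst hLhat
  have hZ : ∀ i, (Zb i)ᵀ * Zb i = 1 := fun i => mul_eq_one_comm.mp (hZb i)
  set X : Fin n → Matrix (Fin r) (Fin p) ℝ := fun i => (Zb i)ᵀ * blk Y i
  have hYX : ∀ i, blk Y i = Zb i * X i := fun i => by
    rw [← Matrix.mul_assoc, hZb, Matrix.one_mul]
  have hX : ∀ i, X i * (X i)ᵀ = 1 := fun i => by
    simp only [X, transpose_mul, transpose_transpose, Matrix.mul_assoc]
    rw [← Matrix.mul_assoc (blk Y i), hY.1 i, Matrix.one_mul, hZ]
  have hconst : ∀ i j, X i = X j := fun i j =>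
    (hG.preconnected i j).apply_eq_of_forall_adj fun _ _ => hY.eq_of_adj hp G hZ hYX hX
  refine ext_sqBlk fun i j => ?_
  rw [sqBlk_mul_transpose, sqBlk_mul_transpose, hYX, hYX, hconst i j, blk_Zstack, blk_Zstack,
    transpose_mul, Matrix.mul_assoc, ← Matrix.mul_assoc (X j), hX, Matrix.one_mul]

/-- **Theorem 1.1 (noiseless landscape).**  If `G` is connected, the measurements are exact
(`Δ = 0`, so `L̂ = L_Z`), and `p ≥ r + 2`, then every second-order critical point `Y` of the
rank-`p` problem satisfies `Y Yᵀ = Z Zᵀ`. -/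
theorem noiseless_landscape
    (n r p : ℕ) (hn : 1 ≤ n) (hr : 1 ≤ r) (hrp : r ≤ p) (hp : r + 2 ≤ p)
    (G : SimpleGraph (Fin n)) [DecidableRel G.Adj] (hG : G.Connected)
    (Zb : Fin n → Matrix (Fin r) (Fin r) ℝ) (hZb : ∀ i, Zb i * (Zb i)ᵀ = 1)
    (Lhat : Matrix (Fin n × Fin r) (Fin n × Fin r) ℝ)
    (hLhat : Lhat = LZmat (G.lapMatrix ℝ) Zb)
    (Y : Matrix (Fin n × Fin r) (Fin p) ℝ)
    (hY : IsSecondOrderCritical Lhat Y) :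
    Y * Yᵀ = Zstack Zb * (Zstack Zb)ᵀ :=
  noiseless_landscape_general n r p hp G hG Zb hZb Lhat hLhat Y hY

end SyncPaper
end

section
/- Let L̂ ∈ ℝ^{rn×rn} be an arbitrary symmetric matrix. If Y is a second-order critical point of the rank-p problem min{⟨L̂, Y Yᵀ⟩ : Y feasible} and Y is rank-deficient (rank(Y) < p), then S(Y) is positive semidefinite; consequently Y Yᵀ is an optimal solution of the SDP relaxation and Y is a global minimizer of the rank-p problem. -/
open Matrix MeasureTheory ProbabilityTheory
open scoped Kronecker BigOperators

/-!
Rank deficiency gives a nonzero `v` with `Y v = 0`. For every `z`, the direction `Ẏ = z vᵀ`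
then satisfies `Ẏ Yᵀ = 0`, so it is tangent, and the second-order condition along it reads
`‖v‖² zᵀ S(Y) z ≥ 0`; hence `S(Y) ⪰ 0`. On the other hand `SBD` is self-adjoint for `⟨·,·⟩`, so
for every `X` with `SBD(X) = I` we get `⟨SBD(L̂ Y Yᵀ), X⟩ = tr(L̂ Y Yᵀ) = ⟨L̂, Y Yᵀ⟩`, i.e.
`⟨L̂, X⟩ - ⟨L̂, Y Yᵀ⟩ = ⟨S(Y), X⟩ ≥ 0` for every SDP-feasible `X`. Finally `Y' Y'ᵀ` is
SDP-feasible for every feasible `Y'`.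
-/

namespace Matrix

theorem exists_mulVec_eq_zero_of_rank_lt {K m n : Type*} [Field K] [Fintype m] [Fintype n]
    (M : Matrix m n K) (h : M.rank < Fintype.card n) : ∃ v ≠ 0, M *ᵥ v = 0 := by
  by_contra! hker
  have hinj : Function.Injective M.mulVecLin := by
    rw [← LinearMap.ker_eq_bot, LinearMap.ker_eq_bot']
    exact fun v hv => by_contra fun hv0 => hker v hv0 hv
  rw [rank, LinearMap.finrank_range_of_inj hinj, Module.finrank_fintype_fun_eq_card] at h
  exact h.false

open scoped ComplexOrder MatrixOrder Matrix.Norms.L2Operator in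
theorem PosSemidef.trace_mul_nonneg {𝕜 m : Type*} [RCLike 𝕜] [Fintype m] {S X : Matrix m m 𝕜}
    (hS : S.PosSemidef) (hX : X.PosSemidef) : 0 ≤ (S * X).trace := by
  classical
  obtain ⟨B, rfl⟩ := CStarAlgebra.nonneg_iff_eq_star_mul_self.mp hX.nonneg
  rw [star_eq_conjTranspose, ← Matrix.mul_assoc, trace_mul_cycle]
  exact (hS.mul_mul_conjTranspose_same B).trace_nonneg

theorem trace_mul_vecMulVec_mul_transpose {α m n : Type*} [CommSemiring α] [Fintype m]
    [Fintype n] (S : Matrix m m α) (z : m → α) (v : n → α) :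
    (S * vecMulVec z v * (vecMulVec z v)ᵀ).trace = (v ⬝ᵥ v) * (z ⬝ᵥ S *ᵥ z) := by
  rw [transpose_vecMulVec, Matrix.mul_assoc, vecMulVec_mul_vecMulVec, vecMulVec_smul,
    Matrix.mul_smul, trace_smul, mul_vecMulVec, trace_vecMulVec, dotProduct_comm (S *ᵥ z),
    smul_eq_mul]

end Matrix

namespace SyncPaper

theorem ip_eq_sum {m : Type*} [Fintype m] (A B : Matrix m m ℝ) :
    ip A B = ∑ q, ∑ q', A q q' * B q q' := by
  simp [ip, Matrix.trace, Matrix.mul_apply]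

theorem ip_comm {m : Type*} [Fintype m] (A B : Matrix m m ℝ) : ip A B = ip B A := by
  rw [ip, ip, ← Matrix.trace_transpose, Matrix.transpose_mul, Matrix.transpose_transpose]

section Blocks

variable {n r p : ℕ}

theorem blk_mul_transpose_blk_apply {α : Type*} [Mul α] [AddCommMonoid α]
    (A B : Matrix (Fin n × Fin r) (Fin p) α) (i : Fin n) (a b : Fin r) :
    (blk A i * (blk B i)ᵀ) a b = (A * Bᵀ) (i, a) (i, b) := by
  simp [blk, Matrix.mul_apply]

theorem blk_tangent_of_mul_transpose_eq_zero {α : Type*} [CommSemiring α]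
    {A Y : Matrix (Fin n × Fin r) (Fin p) α} (h : A * Yᵀ = 0) (i : Fin n) :
    blk A i * (blk Y i)ᵀ + blk Y i * (blk A i)ᵀ = 0 := by
  have h' : Y * Aᵀ = 0 := by rw [← transpose_transpose Y, ← transpose_mul, h, transpose_zero]
  ext a b
  rw [Matrix.add_apply, blk_mul_transpose_blk_apply, blk_mul_transpose_blk_apply, h, h']
  simp

theorem Feasible.SBD_mul_transpose {Y : Matrix (Fin n × Fin r) (Fin p) ℝ} (hY : Feasible Y) :
    SBD (Y * Yᵀ) = 1 := by
  have hdiag (i : Fin n) (a b : Fin r) : (Y * Yᵀ) (i, a) (i, b) = (1 : Matrix _ _ ℝ) a b := by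
    rw [← blk_mul_transpose_blk_apply, hY i]
  ext ⟨i, a⟩ ⟨j, b⟩
  simp only [SBD, Matrix.of_apply]
  split_ifs with hij
  · subst hij
    rw [hdiag, hdiag]
    by_cases hab : a = b <;> simp [Matrix.one_apply, hab, Ne.symm]
  · simp [hij]

theorem Feasible.sdpFeasible {Y : Matrix (Fin n × Fin r) (Fin p) ℝ} (hY : Feasible Y) :
    SDPFeasible (Y * Yᵀ) :=
  ⟨by simpa using Matrix.posSemidef_self_mul_conjTranspose Y, hY.SBD_mul_transpose⟩

end Blocks

section SBD

variable {n r : ℕ}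

theorem SBD_transpose (M : Matrix (Fin n × Fin r) (Fin n × Fin r) ℝ) : (SBD M)ᵀ = SBD M := by
  ext q q'
  simp only [SBD, Matrix.transpose_apply, Matrix.of_apply, eq_comm (a := q'.1), add_comm]

theorem ip_SBD_left (M X : Matrix (Fin n × Fin r) (Fin n × Fin r) ℝ) :
    ip (SBD M) X = ip M (SBD X) := by
  have hsplit (A B : Matrix (Fin n × Fin r) (Fin n × Fin r) ℝ) :
      ip (SBD A) B = ∑ q, ∑ q', (if q.1 = q'.1 then A q q' * B q q' / 2 else 0) +
        ∑ q, ∑ q', (if q.1 = q'.1 then A q' q * B q q' / 2 else 0) := by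
    rw [ip_eq_sum, ← Finset.sum_add_distrib]
    refine Finset.sum_congr rfl fun q _ => ?_
    rw [← Finset.sum_add_distrib]
    refine Finset.sum_congr rfl fun q' _ => ?_
    simp only [SBD, Matrix.of_apply]
    split_ifs <;> ring
  rw [ip_comm M, hsplit, hsplit]
  congr 1
  · simp only [mul_comm (M _ _)]
  · rw [Finset.sum_comm]
    refine Finset.sum_congr rfl fun q _ => Finset.sum_congr rfl fun q' _ => ?_
    simp only [@eq_comm _ q'.1 q.1]
    split_ifs <;> ring

end SBD

section Certificate

variable {n r p : ℕ} {Lhat : Matrix (Fin n × Fin r) (Fin n × Fin r) ℝ}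
  {Y : Matrix (Fin n × Fin r) (Fin p) ℝ}

theorem isHermitian_Smat (hL : Lhatᵀ = Lhat) : (Smat Lhat Y).IsHermitian := by
  rw [Matrix.IsHermitian, Matrix.conjTranspose_eq_transpose_of_trivial, Smat,
    Matrix.transpose_sub, hL, SBD_transpose]

theorem ip_mul_transpose_le_of_posSemidef_Smat (hS : (Smat Lhat Y).PosSemidef)
    {X : Matrix (Fin n × Fin r) (Fin n × Fin r) ℝ} (hX : SDPFeasible X) :
    ip Lhat (Y * Yᵀ) ≤ ip Lhat X := by
  have hSBD : ip (SBD (Lhat * Y * Yᵀ)) X = ip Lhat (Y * Yᵀ) := by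
    rw [ip_SBD_left, hX.2, ip, ip, Matrix.transpose_one, Matrix.mul_one, Matrix.transpose_mul,
      Matrix.transpose_transpose, Matrix.mul_assoc]
  have hsplit : ip Lhat X = ip (Smat Lhat Y) X + ip (SBD (Lhat * Y * Yᵀ)) X := by
    rw [Smat, ip, ip, ip, Matrix.sub_mul, Matrix.trace_sub, sub_add_cancel]
  have hnonneg : 0 ≤ ip (Smat Lhat Y) X := hS.trace_mul_nonneg hX.1.transpose
  linarith

theorem IsSecondOrderCritical.posSemidef_Smat (hL : Lhatᵀ = Lhat)
    (hY : IsSecondOrderCritical Lhat Y) (hrank : Y.rank < p) : (Smat Lhat Y).PosSemidef := by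
  obtain ⟨v, hv0, hYv⟩ := Y.exists_mulVec_eq_zero_of_rank_lt (by simpa using hrank)
  refine Matrix.PosSemidef.of_dotProduct_mulVec_nonneg (isHermitian_Smat hL) fun z => ?_
  have htangent : Matrix.vecMulVec z v * Yᵀ = 0 := by
    rw [Matrix.vecMulVec_mul, Matrix.vecMul_transpose, hYv, Matrix.vecMulVec_zero]
  have hcurv := hY.2.2 _ (blk_tangent_of_mul_transpose_eq_zero htangent)
  rw [Matrix.trace_mul_vecMulVec_mul_transpose] at hcurv
  have hv : 0 < v ⬝ᵥ v := (Finset.sum_nonneg fun i _ => mul_self_nonneg (v i)).lt_of_ne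
    (Ne.symm (dotProduct_self_eq_zero.not.mpr hv0))
  rw [star_trivial]
  exact (mul_nonneg_iff_of_pos_left hv).mp hcurv

end Certificate

theorem rank_deficient_soc_is_global_general
    (n r p : ℕ)
    (Lhat : Matrix (Fin n × Fin r) (Fin n × Fin r) ℝ) (hLhatSym : Lhatᵀ = Lhat)
    (Y : Matrix (Fin n × Fin r) (Fin p) ℝ)
    (hY : IsSecondOrderCritical Lhat Y)
    (hrank : Y.rank < p) :
    (Smat Lhat Y).PosSemidef ∧
    (∀ X : Matrix (Fin n × Fin r) (Fin n × Fin r) ℝ, SDPFeasible X →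
      ip Lhat (Y * Yᵀ) ≤ ip Lhat X) ∧
    (∀ Y' : Matrix (Fin n × Fin r) (Fin p) ℝ, Feasible Y' →
      ip Lhat (Y * Yᵀ) ≤ ip Lhat (Y' * Y'ᵀ)) := by
  have hS := hY.posSemidef_Smat hLhatSym hrank
  exact ⟨hS, fun _ hX => ip_mul_transpose_le_of_posSemidef_Smat hS hX,
    fun _ hY' => ip_mul_transpose_le_of_posSemidef_Smat hS hY'.sdpFeasible⟩

/-- **Lemma 3.1 (rank-deficient second-order critical points are global optima).**  For an
arbitrary symmetric cost matrix `L̂`, if `Y` is a rank-deficient second-order critical point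
of the rank-`p` problem, then `S(Y) ⪰ 0`, `Y Yᵀ` is an optimal solution of the SDP relaxation,
and `Y` is a global minimizer of the rank-`p` problem. -/
theorem rank_deficient_soc_is_global
    (n r p : ℕ) (hn : 1 ≤ n) (hr : 1 ≤ r) (hrp : r ≤ p)
    (Lhat : Matrix (Fin n × Fin r) (Fin n × Fin r) ℝ) (hLhatSym : Lhatᵀ = Lhat)
    (Y : Matrix (Fin n × Fin r) (Fin p) ℝ)
    (hY : IsSecondOrderCritical Lhat Y)
    (hrank : Y.rank < p) :
    (Smat Lhat Y).PosSemidef ∧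
    (∀ X : Matrix (Fin n × Fin r) (Fin n × Fin r) ℝ, SDPFeasible X →
      ip Lhat (Y * Yᵀ) ≤ ip Lhat X) ∧
    (∀ Y' : Matrix (Fin n × Fin r) (Fin p) ℝ, Feasible Y' →
      ip Lhat (Y * Yᵀ) ≤ ip Lhat (Y' * Y'ᵀ)) :=
  rank_deficient_soc_is_global_general n r p Lhat hLhatSym Y hY hrank

end SyncPaper
end

section
/- (Nuclear-norm bound via duality.) Let Y ∈ ℝ^{rn×p} be feasible (Y_i Y_iᵀ = I_r for all i) and let Z ∈ ℝ^{rn×r} be the stack of n copies of I_r. Set R = (1/n) Σ_{i=1}^n Y_i, W_i = Y_i − R, and let W ∈ ℝ^{rn×p} be the stack of the blocks W_i. Then for every M ∈ ℝ^{rn×rn} with ℓ₂→ℓ₂ operator norm ‖M‖ ≤ 1, one has tr(M (Y Yᵀ − Z Zᵀ)ᵀ) ≤ 2 √(rn) ‖W‖_F (equivalently, the nuclear norm of Y Yᵀ − Z Zᵀ is at most 2√(rn)‖W‖_F). -/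
open Matrix MeasureTheory ProbabilityTheory
open scoped Kronecker BigOperators

/-! With `W = Y - Z R` one has `Y Yᵀ - Z Zᵀ = Y Wᵀ + (Y Rᵀ - Z) Zᵀ`. The `i`-th block of
`Y Rᵀ - Z` is `Y_i Rᵀ - Y_i Y_iᵀ = -Y_i W_iᵀ`, whose Frobenius norm is at most `‖W_i‖_F` since
`Y_i` has orthonormal rows. Each of the two terms is then bounded through
`tr(M B Cᵀ) ≤ ‖M‖ ‖B‖_F ‖C‖_F`, and `‖Y‖_F = ‖Z‖_F = √(rn)`. -/

namespace SyncPaper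

open scoped Matrix.Norms.L2Operator

section Frobenius

variable {m k : Type*} [Fintype m] [Fintype k]

lemma frobSq_eq_trace (X : Matrix m k ℝ) : frobSq X = (X * Xᵀ).trace := by
  simp [frobSq, Matrix.trace, Matrix.mul_apply, sq]

lemma frobSq_transpose (X : Matrix m k ℝ) : frobSq Xᵀ = frobSq X :=
  Finset.sum_comm

lemma frobSq_neg (X : Matrix m k ℝ) : frobSq (-X) = frobSq X := by
  simp [frobSq]

lemma frobSq_eq_sum_dotProduct_transpose (X : Matrix m k ℝ) :
    frobSq X = ∑ j, Xᵀ j ⬝ᵥ Xᵀ j := by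
  rw [← frobSq_transpose]
  simp [frobSq, dotProduct, sq]

lemma dotProduct_mulVec_self_le {r p : Type*} [Fintype r] [Fintype p] [DecidableEq r]
    {A : Matrix r p ℝ} (hA : A * Aᵀ = 1) (v : p → ℝ) :
    (A *ᵥ v) ⬝ᵥ (A *ᵥ v) ≤ v ⬝ᵥ v := by
  set u := A *ᵥ v
  have hcross : v ⬝ᵥ (Aᵀ *ᵥ u) = u ⬝ᵥ u := by
    rw [Matrix.mulVec_transpose, dotProduct_comm, ← Matrix.dotProduct_mulVec]
  have hback : (Aᵀ *ᵥ u) ⬝ᵥ (Aᵀ *ᵥ u) = u ⬝ᵥ u := by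
    rw [Matrix.dotProduct_mulVec, Matrix.vecMul_transpose, Matrix.mulVec_mulVec, hA,
      Matrix.one_mulVec]
  -- `Aᵀ u` is the orthogonal projection of `v` onto the row space of `A`.
  have hresidual : (v - Aᵀ *ᵥ u) ⬝ᵥ (v - Aᵀ *ᵥ u) = v ⬝ᵥ v - u ⬝ᵥ u := by
    rw [sub_dotProduct, dotProduct_sub, dotProduct_sub, hback, dotProduct_comm (Aᵀ *ᵥ u) v,
      hcross]
    ring
  have hnonneg : 0 ≤ (v - Aᵀ *ᵥ u) ⬝ᵥ (v - Aᵀ *ᵥ u) := dotProduct_self_star_nonneg _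
  linarith

lemma frobSq_mul_le_of_mul_transpose_eq_one {r p : Type*} [Fintype r] [Fintype p]
    [DecidableEq r] {A : Matrix r p ℝ} (hA : A * Aᵀ = 1) (B : Matrix p k ℝ) :
    frobSq (A * B) ≤ frobSq B := by
  rw [frobSq_eq_sum_dotProduct_transpose, frobSq_eq_sum_dotProduct_transpose]
  refine Finset.sum_le_sum fun j _ => ?_
  rw [Matrix.transpose_mul, Matrix.mul_apply_eq_vecMul, Matrix.vecMul_transpose]
  exact dotProduct_mulVec_self_le hA _

end Frobenius

section OperatorNorm

variable {m m' k : Type*} [Fintype m] [Fintype m'] [Fintype k] [DecidableEq m']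

lemma norm_toLp_eq_sqrt_dotProduct {ι : Type*} [Fintype ι] (w : ι → ℝ) :
    ‖WithLp.toLp 2 w‖ = √(w ⬝ᵥ w) := by
  simp [EuclideanSpace.norm_eq, dotProduct, sq]

lemma opNorm_eq_l2_opNorm (M : Matrix m m' ℝ) : opNorm M = ‖M‖ := rfl

lemma dotProduct_mulVec_le_opNorm (M : Matrix m m' ℝ) (u : m → ℝ) (v : m' → ℝ) :
    u ⬝ᵥ (M *ᵥ v) ≤ opNorm M * √(u ⬝ᵥ u) * √(v ⬝ᵥ v) := by
  calc u ⬝ᵥ (M *ᵥ v)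
      = inner ℝ (WithLp.toLp 2 u) (WithLp.toLp 2 (M *ᵥ v)) := by
        simp [PiLp.inner_apply, dotProduct, mul_comm]
    _ ≤ ‖WithLp.toLp 2 u‖ * ‖WithLp.toLp 2 (M *ᵥ v)‖ := real_inner_le_norm _ _
    _ ≤ ‖WithLp.toLp 2 u‖ * (‖M‖ * ‖WithLp.toLp 2 v‖) := by
        gcongr
        exact M.l2_opNorm_mulVec (WithLp.toLp 2 v)
    _ = opNorm M * √(u ⬝ᵥ u) * √(v ⬝ᵥ v) := by
        rw [norm_toLp_eq_sqrt_dotProduct, norm_toLp_eq_sqrt_dotProduct, opNorm_eq_l2_opNorm]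
        ring

lemma trace_mul_mul_transpose_le_opNorm (M : Matrix m m' ℝ) (B : Matrix m' k ℝ)
    (C : Matrix m k ℝ) :
    (M * B * Cᵀ).trace ≤ opNorm M * √(frobSq B) * √(frobSq C) := by
  have hcols : (M * B * Cᵀ).trace = ∑ j, Cᵀ j ⬝ᵥ (M *ᵥ Bᵀ j) := by
    rw [Matrix.trace_mul_comm, Matrix.trace]
    simp [Matrix.mul_apply, Matrix.mulVec, dotProduct]
  calc (M * B * Cᵀ).trace
      ≤ ∑ j, opNorm M * (√(Cᵀ j ⬝ᵥ Cᵀ j) * √(Bᵀ j ⬝ᵥ Bᵀ j)) := by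
        rw [hcols]
        refine Finset.sum_le_sum fun j _ => ?_
        linarith [dotProduct_mulVec_le_opNorm M (Cᵀ j) (Bᵀ j)]
    _ ≤ opNorm M * (√(frobSq C) * √(frobSq B)) := by
        rw [← Finset.mul_sum, frobSq_eq_sum_dotProduct_transpose C,
          frobSq_eq_sum_dotProduct_transpose B]
        gcongr
        · exact norm_nonneg _
        · exact Real.sum_sqrt_mul_sqrt_le _ (fun j => dotProduct_self_star_nonneg _)
            (fun j => dotProduct_self_star_nonneg _)
    _ = opNorm M * √(frobSq B) * √(frobSq C) := by ring

end OperatorNorm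

section Blocks

variable {n r p : ℕ}

lemma blk_ext {α : Type*} {A B : Matrix (Fin n × Fin r) (Fin p) α}
    (h : ∀ i, blk A i = blk B i) : A = B := by
  ext ⟨i, a⟩ c
  exact congrFun (congrFun (h i) a) c

@[simp]
lemma blk_sub {α : Type*} [Sub α] (A B : Matrix (Fin n × Fin r) (Fin p) α) (i : Fin n) :
    blk (A - B) i = blk A i - blk B i := rfl

@[simp]
lemma blk_mul {α : Type*} [NonUnitalNonAssocSemiring α] {k : ℕ}
    (A : Matrix (Fin n × Fin r) (Fin k) α) (B : Matrix (Fin k) (Fin p) α) (i : Fin n) :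
    blk (A * B) i = blk A i * B := rfl

lemma frobSq_eq_sum_frobSq_blk (X : Matrix (Fin n × Fin r) (Fin p) ℝ) :
    frobSq X = ∑ i, frobSq (blk X i) :=
  Fintype.sum_prod_type _

lemma frobSq_of_feasible {Y : Matrix (Fin n × Fin r) (Fin p) ℝ} (hY : Feasible Y) :
    frobSq Y = r * n := by
  rw [frobSq_eq_sum_frobSq_blk]
  simp [frobSq_eq_trace, hY _, mul_comm]

lemma feasible_of_blk_eq_one {Z : Matrix (Fin n × Fin r) (Fin r) ℝ} (hZ : ∀ i, blk Z i = 1) :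
    Feasible Z := fun i => by
  rw [hZ, Matrix.transpose_one, Matrix.one_mul]

lemma blk_stackedIdentity (i : Fin n) :
    blk (Matrix.of fun (q : Fin n × Fin r) (b : Fin r) => if q.2 = b then (1 : ℝ) else 0) i
      = 1 := by
  ext a b
  simp [blk, Matrix.one_apply]

lemma eq_sub_mul_of_blk_eq_sub {Y W : Matrix (Fin n × Fin r) (Fin p) ℝ}
    {Z : Matrix (Fin n × Fin r) (Fin r) ℝ} {R : Matrix (Fin r) (Fin p) ℝ}
    (hZ : ∀ i, blk Z i = 1) (hW : ∀ i, blk W i = blk Y i - R) : W = Y - Z * R :=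
  blk_ext fun i => by simp [hW, hZ]

lemma frobSq_mul_transpose_sub_le {Y W : Matrix (Fin n × Fin r) (Fin p) ℝ}
    {Z : Matrix (Fin n × Fin r) (Fin r) ℝ} {R : Matrix (Fin r) (Fin p) ℝ}
    (hY : Feasible Y) (hZ : ∀ i, blk Z i = 1) (hW : ∀ i, blk W i = blk Y i - R) :
    frobSq (Y * Rᵀ - Z) ≤ frobSq W := by
  rw [frobSq_eq_sum_frobSq_blk, frobSq_eq_sum_frobSq_blk]
  refine Finset.sum_le_sum fun i _ => ?_
  have hblk : blk (Y * Rᵀ - Z) i = -(blk Y i * (blk W i)ᵀ) := by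
    rw [blk_sub, blk_mul, hZ, ← hY i, hW, Matrix.transpose_sub, Matrix.mul_sub]
    abel
  rw [hblk, frobSq_neg, ← frobSq_transpose (blk W i)]
  exact frobSq_mul_le_of_mul_transpose_eq_one (hY i) _

end Blocks

lemma mul_transpose_sub_mul_transpose_eq {α m k l : Type*} [CommRing α] [Fintype k] [Fintype l]
    {Y W : Matrix m k α} {Z : Matrix m l α} {R : Matrix l k α} (hW : W = Y - Z * R) :
    Y * Yᵀ - Z * Zᵀ = Y * Wᵀ + (Y * Rᵀ - Z) * Zᵀ := by
  rw [hW, Matrix.transpose_sub, Matrix.transpose_mul, Matrix.mul_sub, Matrix.sub_mul,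
    Matrix.mul_assoc]
  abel

theorem nuclear_norm_bound_general
    (n r p : ℕ)
    (Y : Matrix (Fin n × Fin r) (Fin p) ℝ) (hY : Feasible Y)
    (Z : Matrix (Fin n × Fin r) (Fin r) ℝ)
    (hZ : Z = Matrix.of fun (q : Fin n × Fin r) (b : Fin r) => if q.2 = b then (1 : ℝ) else 0)
    (R : Matrix (Fin r) (Fin p) ℝ)
    (W : Matrix (Fin n × Fin r) (Fin p) ℝ) (hW : ∀ i, blk W i = blk Y i - R)
    (M : Matrix (Fin n × Fin r) (Fin n × Fin r) ℝ) (hM : opNorm M ≤ 1) :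
    (M * (Y * Yᵀ - Z * Zᵀ)ᵀ).trace ≤ 2 * Real.sqrt (r * n) * Real.sqrt (frobSq W) := by
  have hZblk : ∀ i, blk Z i = 1 := hZ ▸ blk_stackedIdentity
  have hsplit : (Y * Yᵀ - Z * Zᵀ)ᵀ = Y * Wᵀ + (Y * Rᵀ - Z) * Zᵀ := by
    rw [Matrix.transpose_sub, Matrix.transpose_mul, Matrix.transpose_mul,
      Matrix.transpose_transpose, Matrix.transpose_transpose]
    exact mul_transpose_sub_mul_transpose_eq (eq_sub_mul_of_blk_eq_sub hZblk hW)
  have hE := frobSq_mul_transpose_sub_le hY hZblk hW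
  have hM0 : 0 ≤ opNorm M := norm_nonneg _
  calc (M * (Y * Yᵀ - Z * Zᵀ)ᵀ).trace
      = (M * Y * Wᵀ).trace + (M * (Y * Rᵀ - Z) * Zᵀ).trace := by
        rw [hsplit, Matrix.mul_add, Matrix.trace_add, Matrix.mul_assoc, Matrix.mul_assoc]
    _ ≤ opNorm M * √(frobSq Y) * √(frobSq W)
          + opNorm M * √(frobSq (Y * Rᵀ - Z)) * √(frobSq Z) :=
        add_le_add (trace_mul_mul_transpose_le_opNorm _ _ _)
          (trace_mul_mul_transpose_le_opNorm _ _ _)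
    _ ≤ 1 * √(r * n) * √(frobSq W) + 1 * √(frobSq W) * √(r * n) := by
        rw [frobSq_of_feasible hY, frobSq_of_feasible (feasible_of_blk_eq_one hZblk)]
        gcongr
    _ = 2 * √(r * n) * √(frobSq W) := by ring

/-- **Nuclear-norm bound via duality.**  Let `Y` be feasible, `Z` the stack of `n` copies of
`I_r`, `R = (1/n) Σ_i Y_i`, `W_i = Y_i − R`, and `W` the stack of the `W_i`.  Then for every
`M` with ℓ₂→ℓ₂ operator norm at most `1`,
`tr(M (Y Yᵀ − Z Zᵀ)ᵀ) ≤ 2 √(rn) ‖W‖_F`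
(equivalently, `‖Y Yᵀ − Z Zᵀ‖_* ≤ 2 √(rn) ‖W‖_F`). -/
theorem nuclear_norm_bound
    (n r p : ℕ) (hn : 1 ≤ n) (hr : 1 ≤ r) (hrp : r ≤ p)
    (Y : Matrix (Fin n × Fin r) (Fin p) ℝ) (hY : Feasible Y)
    (Z : Matrix (Fin n × Fin r) (Fin r) ℝ)
    (hZ : Z = Matrix.of fun (q : Fin n × Fin r) (b : Fin r) => if q.2 = b then (1 : ℝ) else 0)
    (R : Matrix (Fin r) (Fin p) ℝ) (hR : R = ((n : ℝ)⁻¹) • ∑ i, blk Y i)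
    (W : Matrix (Fin n × Fin r) (Fin p) ℝ) (hW : ∀ i, blk W i = blk Y i - R)
    (M : Matrix (Fin n × Fin r) (Fin n × Fin r) ℝ) (hM : opNorm M ≤ 1) :
    (M * (Y * Yᵀ - Z * Zᵀ)ᵀ).trace ≤ 2 * Real.sqrt (r * n) * Real.sqrt (frobSq W) :=
  nuclear_norm_bound_general n r p Y hY Z hZ R W hW M hM

end SyncPaper
end
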